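/- Let K = ℚ(α,β,γ,δ,ε,ζ) be the field of rational functions in the six parameters, and let Ψ : K⁴ → K⁴ be the polynomial map Ψ(X,Y,Z,W) = ((2γX−δW)XZ, −(2γX−δW)YZ, (2εX−ζW)W², (2γX−δW)ZW). Then the polynomial F(X,Y,Z,W) divides the composite polynomial F(Ψ(X,Y,Z,W)) in the polynomial ring K[X,Y,Z,W]; i.e. the map Ψ sends the quartic surface Q(α,β,γ,δ,ε,ζ) to itself. -/
import Mathlib


noncomputable section

/-- The field `K = ℚ(α,β,γ,δ,ε,ζ)` of rational functions in the six parameters. -/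
abbrev KK : Type := FractionRing (MvPolynomial (Fin 6) ℚ)

/-- The polynomial ring `K[X,Y,Z,W]`. -/
abbrev RR : Type := MvPolynomial (Fin 4) KK

/-- The six parameters `α,…,ζ` viewed as constants in `K[X,Y,Z,W]`. -/
def prm (i : Fin 6) : RR :=
  MvPolynomial.C (algebraMap (MvPolynomial (Fin 6) ℚ) KK (MvPolynomial.X i))

/-- The defining polynomial `F` of the generalized Inose quartic, as an element of
`K[X,Y,Z,W]` evaluated at the arguments `X Y Z W`. -/
def inoseF (X Y Z W : RR) : RR :=
  Y ^ 2 * Z * W - 4 * X ^ 3 * Z + 3 * prm 0 * X * Z * W ^ 2 + prm 1 * Z * W ^ 3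
    + prm 2 * X * Z ^ 2 * W
    - MvPolynomial.C ((1 : KK) / 2) * (prm 3 * Z ^ 2 * W ^ 2 + prm 5 * W ^ 4)
    + prm 4 * X * W ^ 3

set_option maxHeartbeats 3000000 in
open MvPolynomial in
/-- `F` divides `F ∘ Ψ` in `K[X,Y,Z,W]`, where
`Ψ(X,Y,Z,W) = ((2γX−δW)XZ, −(2γX−δW)YZ, (2εX−ζW)W², (2γX−δW)ZW)` is the map inducing the
Nikulin involution: `Ψ` maps the quartic `Q(α,β,γ,δ,ε,ζ)` to itself. -/
theorem stmt5 :
    inoseF (X 0) (X 1) (X 2) (X 3) ∣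
      inoseF ((2 * prm 2 * X 0 - prm 3 * X 3) * X 0 * X 2)
        (-((2 * prm 2 * X 0 - prm 3 * X 3) * X 1 * X 2))
        ((2 * prm 4 * X 0 - prm 5 * X 3) * X 3 ^ 2)
        ((2 * prm 2 * X 0 - prm 3 * X 3) * X 2 * X 3) := by
  refine ⟨X 2 ^ 2 * X 3 ^ 2 * (2 * prm 2 * X 0 - prm 3 * X 3) ^ 3
      * (2 * prm 4 * X 0 - prm 5 * X 3), ?_⟩
  have h : (2 : RR) * MvPolynomial.C ((1 : KK) / 2) = 1 := by
    rw [show (2 : RR) = MvPolynomial.C (2 : KK) from (map_ofNat _ 2).symm,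
      ← MvPolynomial.C_mul]
    norm_num
  unfold inoseF
  linear_combination ((X 0 * X 2 ^ 2 * X 3 ^ 9 * prm 3 ^ 3 * prm 4 * prm 5) + (-X 0 * X 2 ^ 2 * X 3 ^ 9 * prm 2 * prm 3 ^ 2 * prm 5 ^ 2) + (-X 0 * X 2 ^ 4 * X 3 ^ 7 * prm 3 ^ 4 * prm 4) + (X 0 * X 2 ^ 4 * X 3 ^ 7 * prm 2 * prm 3 ^ 3 * prm 5) + ((-2) * X 0 ^ 2 * X 2 ^ 2 * X 3 ^ 8 * prm 3 ^ 3 * prm 4 ^ 2) + ((-2) * X 0 ^ 2 * X 2 ^ 2 * X 3 ^ 8 * prm 2 * prm 3 ^ 2 * prm 4 * prm 5) + ((4) * X 0 ^ 2 * X 2 ^ 2 * X 3 ^ 8 * prm 2 ^ 2 * prm 3 * prm 5 ^ 2) + ((6) * X 0 ^ 2 * X 2 ^ 4 * X 3 ^ 6 * prm 2 * prm 3 ^ 3 * prm 4) + ((-6) * X 0 ^ 2 * X 2 ^ 4 * X 3 ^ 6 * prm 2 ^ 2 * prm 3 ^ 2 * prm 5) + ((8) * X 0 ^ 3 * X 2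 ^ 2 * X 3 ^ 7 * prm 2 * prm 3 ^ 2 * prm 4 ^ 2) + ((-4) * X 0 ^ 3 * X 2 ^ 2 * X 3 ^ 7 * prm 2 ^ 2 * prm 3 * prm 4 * prm 5) + ((-4) * X 0 ^ 3 * X 2 ^ 2 * X 3 ^ 7 * prm 2 ^ 3 * prm 5 ^ 2) + ((-12) * X 0 ^ 3 * X 2 ^ 4 * X 3 ^ 5 * prm 2 ^ 2 * prm 3 ^ 2 * prm 4) + ((12) * X 0 ^ 3 * X 2 ^ 4 * X 3 ^ 5 * prm 2 ^ 3 * prm 3 * prm 5) + ((-8) * X 0 ^ 4 * X 2 ^ 2 * X 3 ^ 6 * prm 2 ^ 2 * prm 3 * prm 4 ^ 2) + ((8) * X 0 ^ 4 * X 2 ^ 2 * X 3 ^ 6 * prm 2 ^ 3 * prm 4 * prm 5) + ((8) * X 0 ^ 4 * X 2 ^ 4 * X 3 ^ 4 * prm 2 ^ 3 * prm 3 * prm 4) + ((-8) * X 0 ^ 4 * X 2 ^ 4 * X 3 ^ 4 * prm 2 ^ 4 * prm 5)) * h
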